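/- arXiv:2212.07149 — 2 statements merged into one kernel-verified Lean document; each statement's English description precedes it below -/
import Mathlib

section
/- (Fundamental proximal gradient inequality, strongly convex version) Let f be μ-strongly convex and L-smooth, g proper closed convex, φ = f + g, t > 0, and G(y,t) the proximal gradient mapping at y. Then for all x, y: φ(x) − φ(y − tG(y,t)) ≥ t(1 − (L/2)t)‖G(y,t)‖² + ⟨G(y,t), x − y⟩ + (μ/2)‖x − y‖². -/
/-!
Add three inequalities at the prox point `p = y - t • G`: the first-order lower bound
`f x ≥ f y + ⟪∇f y, x - y⟫ + μ/2 ‖x - y‖²` of the strongly convex `f`, the descent lemma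
`f p ≤ f y + ⟪∇f y, p - y⟫ + L/2 ‖p - y‖²` of the `L`-smooth `f`, and the optimality condition
`g x ≥ g p + ⟪G - ∇f y, x - p⟫` of the prox subproblem. Both first-order conditions come from one
fact: if `p` minimizes `g + q` with `g` convex, then `s ↦ q (p + s • (x - p)) + s * (g x - g p)`
is minimized on `[0, 1]` at `s = 0`, so its derivative there is nonnegative.
-/

open scoped RealInnerProductSpace
open Set

section

variable {E : Type*} [NormedAddCommGroup E] [InnerProductSpace ℝ E]

theorem ConvexOn.le_add_of_isMinOn_add {g q : E → ℝ} {p x : E} {D : ℝ}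
    (hg : ConvexOn ℝ univ g) (hmin : IsMinOn (g + q) univ p)
    (hq : HasLineDerivAt ℝ q D p (x - p)) : g p ≤ g x + D := by
  set ψ : ℝ → ℝ := fun s => q (p + s • (x - p)) + s * (g x - g p)
  have hψ : HasDerivAt ψ (D + (g x - g p)) 0 :=
    hq.add (hasDerivAt_mul_const (g x - g p))
  have hψmin : IsMinOn ψ (Icc 0 1) 0 := by
    intro s ⟨hs₀, hs₁⟩
    have hconv : g (p + s • (x - p)) ≤ (1 - s) * g p + s * g x := by
      have := hg.2 (mem_univ p) (mem_univ x) (sub_nonneg.2 hs₁) hs₀ (by ring)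
      rwa [show (1 - s) • p + s • x = p + s • (x - p) by module, smul_eq_mul, smul_eq_mul] at this
    have hle := hmin (mem_univ (p + s • (x - p)))
    simp only [mem_ofPred_eq, Pi.add_apply] at hle
    simp only [mem_ofPred_eq, ψ, zero_smul, add_zero, zero_mul]
    linarith
  have hcone : (1 : ℝ) ∈ posTangentConeAt (Icc 0 1) 0 :=
    mem_posTangentConeAt_of_segment_subset (by simp [segment_eq_Icc])
  have := hψmin.localize.hasFDerivWithinAt_nonneg hψ.hasFDerivAt.hasFDerivWithinAt hcone
  simp only [ContinuousLinearMap.toSpanSingleton_apply, smul_eq_mul, one_mul] at this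
  linarith

theorem ConvexOn.add_le_of_hasLineDerivAt {F : E → ℝ} {x y : E} {D : ℝ}
    (hF : ConvexOn ℝ univ F) (hD : HasLineDerivAt ℝ F D y (x - y)) : F y + D ≤ F x := by
  -- every point minimizes `F + -F`
  have := hF.le_add_of_isMinOn_add (q := -F) (fun z _ => by simp) hD.neg
  linarith

theorem hasLineDerivAt_norm_sub_sq (u p v : E) :
    HasLineDerivAt ℝ (fun z => ‖z - u‖ ^ 2) (2 * ⟪p - u, v⟫) p v := by
  have hline : HasDerivAt (fun s : ℝ => p + s • v - u) v 0 := by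
    simpa using (((hasDerivAt_id (0 : ℝ)).smul_const v).const_add p).sub_const u
  simpa [HasLineDerivAt] using hline.norm_sq

theorem ConvexOn.add_inner_le_of_isMinOn_add_sq {g : E → ℝ} {c : ℝ} {u p : E}
    (hg : ConvexOn ℝ univ g) (hmin : IsMinOn (fun z => g z + c * ‖z - u‖ ^ 2) univ p) (x : E) :
    g p + 2 * c * ⟪u - p, x - p⟫ ≤ g x := by
  have := hg.le_add_of_isMinOn_add hmin ((hasLineDerivAt_norm_sub_sq u p (x - p)).const_mul c)
  rw [← neg_sub p u, inner_neg_left]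
  linarith

variable [CompleteSpace E]

theorem HasGradientAt.hasDerivAt_add_smul {f : E → ℝ} {f' a v : E} {s : ℝ}
    (hf : HasGradientAt f f' (a + s • v)) :
    HasDerivAt (fun s : ℝ => f (a + s • v)) ⟪f', v⟫ s := by
  have hline : HasDerivAt (fun s : ℝ => a + s • v) v s := by
    simpa using ((hasDerivAt_id s).smul_const v).const_add a
  exact hf.hasFDerivAt.comp_hasDerivAt s hline

theorem HasGradientAt.hasLineDerivAt {f : E → ℝ} {f' x : E} (hf : HasGradientAt f f' x)
    (v : E) : HasLineDerivAt ℝ f ⟪f', v⟫ x v :=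
  HasGradientAt.hasDerivAt_add_smul (s := 0) (by simpa using hf)

theorem add_inner_add_sq_le_of_convexOn_sub_sq {f : E → ℝ} {f' x y : E} {μ : ℝ}
    (hf : ConvexOn ℝ univ (fun z => f z - μ / 2 * ‖z‖ ^ 2)) (hy : HasGradientAt f f' y) :
    f y + ⟪f', x - y⟫ + μ / 2 * ‖x - y‖ ^ 2 ≤ f x := by
  have hsq : HasLineDerivAt ℝ (fun z => ‖z‖ ^ 2) (2 * ⟪y, x - y⟫) y (x - y) := by
    simpa using hasLineDerivAt_norm_sub_sq 0 y (x - y)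
  have := hf.add_le_of_hasLineDerivAt ((hy.hasLineDerivAt (x - y)).sub (hsq.const_mul (μ / 2)))
  have hexpand : ‖x‖ ^ 2 = ‖y‖ ^ 2 + 2 * ⟪y, x - y⟫ + ‖x - y‖ ^ 2 := by
    simpa using norm_add_sq_real y (x - y)
  rw [hexpand] at this
  linarith

theorem le_add_inner_add_sq_of_lipschitz_gradient {f : E → ℝ} {f' : E → E} {L : ℝ}
    (hf : ∀ x, HasGradientAt f (f' x) x) (hlip : ∀ x y, ‖f' x - f' y‖ ≤ L * ‖x - y‖) (a b : E) :
    f b ≤ f a + ⟪f' a, b - a⟫ + L / 2 * ‖b - a‖ ^ 2 := by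
  set v := b - a
  set φ : ℝ → ℝ := fun s => f (a + s • v) - s * ⟪f' a, v⟫ - L / 2 * s ^ 2 * ‖v‖ ^ 2
  set φ' : ℝ → ℝ := fun s => ⟪f' (a + s • v), v⟫ - ⟪f' a, v⟫ - L * s * ‖v‖ ^ 2
  have hφ : ∀ s, HasDerivAt φ (φ' s) s := fun s => by
    have := (((hf (a + s • v)).hasDerivAt_add_smul).sub (hasDerivAt_mul_const ⟪f' a, v⟫)).sub
      (((hasDerivAt_pow 2 s).const_mul (L / 2)).mul_const (‖v‖ ^ 2))
    exact this.congr_deriv (by simp only [φ']; push_cast; ring)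
  obtain ⟨c, ⟨hc₀, -⟩, hc⟩ := exists_hasDerivAt_eq_slope φ φ' zero_lt_one
    (fun s _ => (hφ s).continuousAt.continuousWithinAt) (fun s _ => hφ s)
  have hφ'c : φ' c ≤ 0 := by
    have hcs : ⟪f' (a + c • v) - f' a, v⟫ ≤ L * c * ‖v‖ ^ 2 :=
      calc ⟪f' (a + c • v) - f' a, v⟫ ≤ ‖f' (a + c • v) - f' a‖ * ‖v‖ := real_inner_le_norm _ _
        _ ≤ L * ‖c • v‖ * ‖v‖ := by
          gcongr
          simpa using hlip (a + c • v) a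
        _ = L * c * ‖v‖ ^ 2 := by rw [norm_smul, Real.norm_of_nonneg hc₀.le]; ring
    simp only [φ', inner_sub_left] at hcs ⊢
    linarith
  have hb : a + v = b := add_sub_cancel a b
  simp only [φ, zero_smul, add_zero, one_smul, hb, sub_zero, div_one] at hc
  linarith

end

theorem fundamental_prox_grad_inequality_general
    {E : Type*} [NormedAddCommGroup E] [InnerProductSpace ℝ E] [FiniteDimensional ℝ E]
    (f : E → ℝ) (f' : E → E) (g : E → ℝ) (μ L : ℝ)
    (hdiff : ∀ x, HasGradientAt f (f' x) x)
    (hsc : ConvexOn ℝ Set.univ (fun z => f z - μ / 2 * ‖z‖ ^ 2))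
    (hlip : ∀ x y, ‖f' x - f' y‖ ≤ L * ‖x - y‖)
    (hg : ConvexOn ℝ Set.univ g)
    (t : ℝ) (ht : 0 < t) (prox : E → E)
    (hprox : ∀ y : E, IsMinOn (fun z => g z + (1 / (2 * t)) * ‖z - y‖ ^ 2) Set.univ (prox y)) :
    ∀ x y : E,
      (f x + g x) - (f (y - t • ((1 / t) • (y - prox (y - t • f' y))))
          + g (y - t • ((1 / t) • (y - prox (y - t • f' y)))))
        ≥ t * (1 - L / 2 * t) * ‖(1 / t) • (y - prox (y - t • f' y))‖ ^ 2
          + ⟪(1 / t) • (y - prox (y - t • f' y)), x - y⟫ + μ / 2 * ‖x - y‖ ^ 2 := by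
  intro x y
  set G := (1 / t) • (y - prox (y - t • f' y))
  have hp : prox (y - t • f' y) = y - t • G := by simp [G, smul_smul, ht.ne']
  have hfx := add_inner_add_sq_le_of_convexOn_sub_sq (x := x) hsc (hdiff y)
  have hfp := le_add_inner_add_sq_of_lipschitz_gradient hdiff hlip y (y - t • G)
  have hgp := hg.add_inner_le_of_isMinOn_add_sq (hprox (y - t • f' y)) x
  rw [hp, show y - t • f' y - (y - t • G) = t • (G - f' y) by module,
    show x - (y - t • G) = (x - y) + t • G by abel] at hgp
  rw [show y - t • G - y = -(t • G) by abel, norm_neg, norm_smul, inner_neg_right,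
    real_inner_smul_right] at hfp
  rw [real_inner_smul_left, inner_add_right, real_inner_smul_right, inner_sub_left,
    inner_sub_left, real_inner_self_eq_norm_sq, show 2 * (1 / (2 * t)) = t⁻¹ by ring, ← mul_assoc,
    inv_mul_cancel₀ ht.ne', one_mul] at hgp
  rw [Real.norm_of_nonneg ht.le] at hfp
  linarith

/-- **Fundamental proximal gradient inequality (strongly convex version).** With
`G(y,t) = (1/t)(y - prox_{tg}(y - t∇f y))`, for all `x, y`:
`φ(x) - φ(y - tG(y,t)) ≥ t(1 - (L/2)t)‖G(y,t)‖² + ⟪G(y,t), x - y⟫ + (μ/2)‖x - y‖²`. -/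
theorem fundamental_prox_grad_inequality
    {E : Type*} [NormedAddCommGroup E] [InnerProductSpace ℝ E] [FiniteDimensional ℝ E]
    (f : E → ℝ) (f' : E → E) (g : E → ℝ) (μ L : ℝ) (hμ : 0 ≤ μ) (hL : 0 < L)
    (hdiff : ∀ x, HasGradientAt f (f' x) x)
    (hsc : ConvexOn ℝ Set.univ (fun z => f z - μ / 2 * ‖z‖ ^ 2))
    (hlip : ∀ x y, ‖f' x - f' y‖ ≤ L * ‖x - y‖)
    (hg : ConvexOn ℝ Set.univ g)
    (t : ℝ) (ht : 0 < t) (prox : E → E)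
    (hprox : ∀ y : E, IsMinOn (fun z => g z + (1 / (2 * t)) * ‖z - y‖ ^ 2) Set.univ (prox y)) :
    ∀ x y : E,
      (f x + g x) - (f (y - t • ((1 / t) • (y - prox (y - t • f' y))))
          + g (y - t • ((1 / t) • (y - prox (y - t • f' y)))))
        ≥ t * (1 - L / 2 * t) * ‖(1 / t) • (y - prox (y - t • f' y))‖ ^ 2
          + ⟪(1 / t) • (y - prox (y - t • f' y)), x - y⟫ + μ / 2 * ‖x - y‖ ^ 2 :=
  fundamental_prox_grad_inequality_general f f' g μ L hdiff hsc hlip hg t ht prox hprox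
end

section
/- (Potential decrease for proximal gradient descent) Let f be convex and L-smooth, g proper closed convex, φ = f + g with minimum value φ̄ attained. Fix 0 < η ≤ 1 and let x^{k+1} = x^k − (η/L)G(x^k, η/L). Then the potential C_k := (η/L)·k·‖G(x^k, η/L)‖² + φ(x^k) − φ̄ satisfies C_{k+1} ≤ C_k for all k ≥ 0. -/
open scoped RealInnerProductSpace

open Set

/-!
Write `G` for the gradient mapping with step `t = η / L` and `x⁺ = x - t G x`, and let
`d = ∇f x - ∇f x⁺`. Testing the optimality conditions of the prox steps at `x` and at `x⁺`
against each other gives `‖G x⁺‖ ≤ ‖G x - d‖`, while convexity of `f` and `g` gives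
`t ⟪G x - d, G x⟫ ≤ φ x - φ x⁺`. Cocoercivity of `∇f` and `t L ≤ 1` give `‖d‖² ≤ ⟪d, G x⟫`,
hence `‖G x⁺‖² ≤ ‖G x - d‖² ≤ ⟪G x - d, G x⟫ ≤ ‖G x‖²`. So `‖G x‖` does not increase along
the iteration and `t ‖G x⁺‖² ≤ φ x - φ x⁺`, which together say that the potential does not
increase.
-/

section FirstOrder

variable {E : Type*} [NormedAddCommGroup E] [InnerProductSpace ℝ E] [CompleteSpace E]
  {f : E → ℝ}

theorem HasGradientAt.hasDerivAt_comp_add_smul {f' x v : E} {r : ℝ}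
    (hf : HasGradientAt f f' (x + r • v)) :
    HasDerivAt (fun s : ℝ => f (x + s • v)) ⟪f', v⟫ r := by
  have hline : HasDerivAt (fun s : ℝ => x + s • v) v r := by
    simpa using ((hasDerivAt_id r).smul_const v).const_add x
  simpa [Function.comp_def] using (hasGradientAt_iff_hasFDerivAt.mp hf).comp_hasDerivAt r hline

theorem ConvexOn.add_inner_le_of_hasGradientAt {f' x : E} (hfc : ConvexOn ℝ univ f)
    (hf : HasGradientAt f f' x) (y : E) : f x + ⟪f', y - x⟫ ≤ f y := by
  have hconv : ConvexOn ℝ univ (fun s : ℝ => f (x + s • (y - x))) := by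
    simpa [Function.comp_def, AffineMap.lineMap_apply_module', add_comm] using
      hfc.comp_affineMap (AffineMap.lineMap x y : ℝ →ᵃ[ℝ] E)
  have hderiv : HasDerivAt (fun s : ℝ => f (x + s • (y - x))) ⟪f', y - x⟫ 0 :=
    HasGradientAt.hasDerivAt_comp_add_smul (by simpa using hf)
  have := hconv.le_slope_of_hasDerivAt (mem_univ 0) (mem_univ 1) zero_lt_one hderiv
  simp only [slope_def_field, zero_smul, one_smul, add_zero, add_sub_cancel, sub_zero,
    div_one] at this
  linarith

theorem le_add_inner_add_of_lipschitz_gradient {f' : E → E} {L : ℝ}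
    (hf : ∀ x, HasGradientAt f (f' x) x) (hlip : ∀ x y, ‖f' x - f' y‖ ≤ L * ‖x - y‖) (x y : E) :
    f y ≤ f x + ⟪f' x, y - x⟫ + L / 2 * ‖y - x‖ ^ 2 := by
  set v := y - x
  let χ : ℝ → ℝ := fun r => f (x + r • v) - r * ⟪f' x, v⟫ - L / 2 * ‖v‖ ^ 2 * r ^ 2
  have hχ : ∀ r, HasDerivAt χ (⟪f' (x + r • v) - f' x, v⟫ - L * ‖v‖ ^ 2 * r) r := by
    intro r
    refine ((((hf _).hasDerivAt_comp_add_smul).sub (hasDerivAt_mul_const ⟪f' x, v⟫)).sub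
      ((hasDerivAt_pow 2 r).const_mul (L / 2 * ‖v‖ ^ 2))).congr_deriv ?_
    rw [inner_sub_left]; push_cast; ring
  have hanti : AntitoneOn χ (Icc 0 1) := by
    refine antitoneOn_of_hasDerivWithinAt_nonpos (convex_Icc 0 1)
      (fun r _ => (hχ r).continuousAt.continuousWithinAt) (fun r _ => (hχ r).hasDerivWithinAt) ?_
    intro r hr
    rw [interior_Icc] at hr
    have hdist : ‖x + r • v - x‖ = r * ‖v‖ := by
      rw [add_sub_cancel_left, norm_smul, Real.norm_of_nonneg hr.1.le]
    calc ⟪f' (x + r • v) - f' x, v⟫ - L * ‖v‖ ^ 2 * r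
        ≤ ‖f' (x + r • v) - f' x‖ * ‖v‖ - L * ‖v‖ ^ 2 * r := by
          gcongr; exact real_inner_le_norm _ _
      _ ≤ L * ‖x + r • v - x‖ * ‖v‖ - L * ‖v‖ ^ 2 * r := by gcongr; exact hlip _ _
      _ = 0 := by rw [hdist]; ring
  have := hanti (left_mem_Icc.mpr zero_le_one) (right_mem_Icc.mpr zero_le_one) zero_le_one
  simp only [χ, zero_smul, one_smul, add_zero, add_sub_cancel, v] at this
  linarith

theorem ConvexOn.add_inner_add_le_of_lipschitz_gradient {f' : E → E} {L : ℝ}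
    (hfc : ConvexOn ℝ univ f) (hf : ∀ x, HasGradientAt f (f' x) x)
    (hlip : ∀ x y, ‖f' x - f' y‖ ≤ L * ‖x - y‖) (x y : E) :
    f x + ⟪f' x, y - x⟫ + 1 / (2 * L) * ‖f' y - f' x‖ ^ 2 ≤ f y := by
  set d := f' y - f' x
  -- bound `f` at `z` below by the tangent at `x` and above by the quadratic model at `y`
  set z := y - L⁻¹ • d
  have hbelow := hfc.add_inner_le_of_hasGradientAt (hf x) z
  have habove := le_add_inner_add_of_lipschitz_gradient hf hlip y z
  have hzx : z - x = (y - x) - L⁻¹ • d := by simp only [z]; abel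
  have hzy : z - y = -(L⁻¹ • d) := by simp only [z]; abel
  rw [hzx, inner_sub_right, real_inner_smul_right] at hbelow
  rw [hzy, inner_neg_right, real_inner_smul_right, norm_neg, norm_smul, Real.norm_eq_abs,
    mul_pow, sq_abs] at habove
  have hdd : L⁻¹ * ⟪f' y, d⟫ - L⁻¹ * ⟪f' x, d⟫ = L⁻¹ * ‖d‖ ^ 2 := by
    rw [← mul_sub, ← inner_sub_left, real_inner_self_eq_norm_sq]
  have hcoef : L / 2 * (L⁻¹ ^ 2 * ‖d‖ ^ 2) = L⁻¹ * ‖d‖ ^ 2 - 1 / (2 * L) * ‖d‖ ^ 2 := by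
    rcases eq_or_ne L 0 with rfl | hL
    · simp
    · field_simp; ring
  linarith

theorem ConvexOn.inv_mul_sq_le_inner_of_lipschitz_gradient {f' : E → E} {L : ℝ}
    (hfc : ConvexOn ℝ univ f) (hf : ∀ x, HasGradientAt f (f' x) x)
    (hlip : ∀ x y, ‖f' x - f' y‖ ≤ L * ‖x - y‖) (x y : E) :
    L⁻¹ * ‖f' x - f' y‖ ^ 2 ≤ ⟪f' x - f' y, x - y⟫ := by
  have hxy := hfc.add_inner_add_le_of_lipschitz_gradient hf hlip x y
  have hyx := hfc.add_inner_add_le_of_lipschitz_gradient hf hlip y x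
  rw [norm_sub_rev] at hxy
  have hsum : ⟪f' x, y - x⟫ + ⟪f' y, x - y⟫ = -⟪f' x - f' y, x - y⟫ := by
    rw [← neg_sub x y, inner_neg_right, inner_sub_left]; ring
  have hcoef : 1 / (2 * L) * ‖f' x - f' y‖ ^ 2 + 1 / (2 * L) * ‖f' x - f' y‖ ^ 2
      = L⁻¹ * ‖f' x - f' y‖ ^ 2 := by ring
  linarith

theorem ConvexOn.sq_norm_sub_le_inner_of_lipschitz_gradient {f' : E → E} {L t : ℝ}
    (hfc : ConvexOn ℝ univ f) (hf : ∀ x, HasGradientAt f (f' x) x)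
    (hlip : ∀ x y, ‖f' x - f' y‖ ≤ L * ‖x - y‖) (hL : 0 < L) (ht : 0 < t) (htL : t * L ≤ 1)
    (x v : E) :
    ‖f' x - f' (x - t • v)‖ ^ 2 ≤ ⟪f' x - f' (x - t • v), v⟫ := by
  have hcoco := hfc.inv_mul_sq_le_inner_of_lipschitz_gradient hf hlip x (x - t • v)
  rw [sub_sub_cancel, real_inner_smul_right] at hcoco
  have hscaled : ‖f' x - f' (x - t • v)‖ ^ 2 ≤ (t * L) * ⟪f' x - f' (x - t • v), v⟫ := by
    have := mul_le_mul_of_nonneg_left hcoco hL.le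
    rwa [mul_inv_cancel_left₀ hL.ne', ← mul_assoc, mul_comm L t] at this
  have hinner : 0 ≤ ⟪f' x - f' (x - t • v), v⟫ :=
    nonneg_of_mul_nonneg_right ((sq_nonneg _).trans hscaled) (by positivity)
  nlinarith

end FirstOrder

section ProximalGradient

variable {E : Type*} [NormedAddCommGroup E] [InnerProductSpace ℝ E]
  {f g : E → ℝ} {f' prox : E → E} {t : ℝ}

theorem ConvexOn.add_inner_le_of_isMinOn_prox {y p : E}
    (hgc : ConvexOn ℝ univ g) (hp : IsMinOn (fun z => g z + 1 / (2 * t) * ‖z - y‖ ^ 2) univ p)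
    (z : E) : g p + ⟪t⁻¹ • (y - p), z - p⟫ ≤ g z := by
  -- the prox objective along `[p, z]` with `g` replaced by its chord, still minimal at `0`
  let h : ℝ → ℝ := fun l => l * (g z - g p) + 1 / (2 * t) * ‖p + l • (z - p) - y‖ ^ 2
  have hmin : IsMinOn h (Icc 0 1) 0 := by
    intro l hl
    have hconv : g (p + l • (z - p)) ≤ (1 - l) * g p + l * g z := by
      have := hgc.2 (mem_univ p) (mem_univ z) (sub_nonneg.mpr hl.2) hl.1 (by ring)
      rwa [show (1 - l) • p + l • z = p + l • (z - p) by module] at this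
    have := hp (mem_univ (p + l • (z - p)))
    simp only [mem_ofPred_eq] at this
    simp only [h, mem_ofPred_eq, zero_smul, add_zero, zero_mul, zero_add]
    linarith
  have hderiv : HasDerivAt h (g z - g p + 1 / (2 * t) * (2 * ⟪p - y, z - p⟫)) 0 := by
    have hline : HasDerivAt (fun l : ℝ => p + l • (z - p) - y) (z - p) 0 := by
      simpa using (((hasDerivAt_id (0 : ℝ)).smul_const (z - p)).const_add p).sub_const y
    have := ((hasDerivAt_id (0 : ℝ)).mul_const (g z - g p)).add
      (hline.norm_sq.const_mul (1 / (2 * t)))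
    simp only [id, one_mul, zero_smul, add_zero] at this
    exact this
  have hsegment : segment ℝ (0 : ℝ) (0 + 1) ⊆ Icc 0 1 := by simp [segment_eq_Icc]
  have := hmin.localize.hasFDerivWithinAt_nonneg hderiv.hasFDerivAt.hasFDerivWithinAt
    (mem_posTangentConeAt_of_segment_subset hsegment)
  rw [ContinuousLinearMap.toSpanSingleton_apply, one_smul] at this
  have hinner : ⟪t⁻¹ • (y - p), z - p⟫ = -(1 / (2 * t) * (2 * ⟪p - y, z - p⟫)) := by
    rw [real_inner_smul_left, ← neg_sub p y, inner_neg_left]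
    field_simp
  linarith

noncomputable def gradientMapping (f' prox : E → E) (t : ℝ) (x : E) : E :=
  t⁻¹ • (x - prox (x - t • f' x))

local notation "𝒢" => gradientMapping f' prox t

theorem sub_smul_gradientMapping (ht : t ≠ 0) (x : E) :
    x - t • 𝒢 x = prox (x - t • f' x) := by
  rw [gradientMapping, smul_inv_smul₀ ht, sub_sub_cancel]

theorem add_inner_gradientMapping_le (hgc : ConvexOn ℝ univ g)
    (hprox : ∀ y, IsMinOn (fun z => g z + 1 / (2 * t) * ‖z - y‖ ^ 2) univ (prox y))
    (ht : t ≠ 0) (x z : E) :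
    g (x - t • 𝒢 x) + ⟪𝒢 x - f' x, z - (x - t • 𝒢 x)⟫ ≤ g z := by
  have h := hgc.add_inner_le_of_isMinOn_prox (hprox (x - t • f' x)) z
  rwa [← sub_smul_gradientMapping (f' := f') (prox := prox) ht x, sub_sub_sub_cancel_left,
    smul_sub, inv_smul_smul₀ ht, inv_smul_smul₀ ht] at h

theorem norm_gradientMapping_sub_smul_le_norm_sub (hgc : ConvexOn ℝ univ g)
    (hprox : ∀ y, IsMinOn (fun z => g z + 1 / (2 * t) * ‖z - y‖ ^ 2) univ (prox y))
    (ht : 0 < t) (x : E) :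
    ‖𝒢 (x - t • 𝒢 x)‖ ≤ ‖𝒢 x - (f' x - f' (x - t • 𝒢 x))‖ := by
  set p := x - t • 𝒢 x
  set q := p - t • 𝒢 p
  set A := 𝒢 x - (f' x - f' p)
  -- the optimality conditions of the two prox steps, tested against each other's output
  have hp := add_inner_gradientMapping_le (f' := f') hgc hprox ht.ne' x q
  have hq := add_inner_gradientMapping_le (f' := f') hgc hprox ht.ne' p p
  rw [show q - p = -(t • 𝒢 p) by simp only [q]; abel, inner_neg_right, real_inner_smul_right]
    at hp
  rw [sub_sub_cancel, real_inner_smul_right] at hq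
  have hsplit : ⟪A, 𝒢 p⟫ = ⟪𝒢 x - f' x, 𝒢 p⟫ + ⟪f' p, 𝒢 p⟫ := by
    rw [← inner_add_left]; congr 1; simp only [A]; abel
  have hsq : ‖𝒢 p‖ ^ 2 ≤ ⟪A, 𝒢 p⟫ := by
    rw [hsplit, ← real_inner_self_eq_norm_sq]
    rw [inner_sub_left] at hq
    nlinarith
  have hcs := real_inner_le_norm A (𝒢 p)
  nlinarith [norm_nonneg (𝒢 p), norm_nonneg A]

theorem mul_inner_gradientMapping_le [CompleteSpace E] (hfc : ConvexOn ℝ univ f)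
    (hf : ∀ x, HasGradientAt f (f' x) x) (hgc : ConvexOn ℝ univ g)
    (hprox : ∀ y, IsMinOn (fun z => g z + 1 / (2 * t) * ‖z - y‖ ^ 2) univ (prox y))
    (ht : t ≠ 0) (x : E) :
    t * ⟪𝒢 x - (f' x - f' (x - t • 𝒢 x)), 𝒢 x⟫
      ≤ (f x + g x) - (f (x - t • 𝒢 x) + g (x - t • 𝒢 x)) := by
  set p := x - t • 𝒢 x
  have hf_below := hfc.add_inner_le_of_hasGradientAt (hf p) x
  have hg_below := add_inner_gradientMapping_le (f' := f') hgc hprox ht x x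
  have hxp : x - p = t • 𝒢 x := sub_sub_cancel x _
  have hsplit : ⟪f' p, x - p⟫ + ⟪𝒢 x - f' x, x - p⟫ = t * ⟪𝒢 x - (f' x - f' p), 𝒢 x⟫ := by
    rw [← inner_add_left, hxp, real_inner_smul_right]; congr 2; abel
  linarith

theorem sq_norm_gradientMapping_sub_smul_le_inner [CompleteSpace E] {L : ℝ}
    (hfc : ConvexOn ℝ univ f) (hf : ∀ x, HasGradientAt f (f' x) x)
    (hlip : ∀ x y, ‖f' x - f' y‖ ≤ L * ‖x - y‖) (hgc : ConvexOn ℝ univ g)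
    (hprox : ∀ y, IsMinOn (fun z => g z + 1 / (2 * t) * ‖z - y‖ ^ 2) univ (prox y))
    (hL : 0 < L) (ht : 0 < t) (htL : t * L ≤ 1) (x : E) :
    ‖𝒢 (x - t • 𝒢 x)‖ ^ 2 ≤ ⟪𝒢 x - (f' x - f' (x - t • 𝒢 x)), 𝒢 x⟫ := by
  set d := f' x - f' (x - t • 𝒢 x)
  have hprox_le := norm_gradientMapping_sub_smul_le_norm_sub (f' := f') hgc hprox ht x
  have hcoco : ‖d‖ ^ 2 ≤ ⟪d, 𝒢 x⟫ :=
    hfc.sq_norm_sub_le_inner_of_lipschitz_gradient hf hlip hL ht htL x (𝒢 x)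
  have hexpand : ‖𝒢 x - d‖ ^ 2 = ‖𝒢 x‖ ^ 2 - 2 * ⟪d, 𝒢 x⟫ + ‖d‖ ^ 2 := by
    rw [norm_sub_sq_real, real_inner_comm]
  have hinner : ⟪𝒢 x - d, 𝒢 x⟫ = ‖𝒢 x‖ ^ 2 - ⟪d, 𝒢 x⟫ := by
    rw [inner_sub_left, real_inner_self_eq_norm_sq]
  calc ‖𝒢 (x - t • 𝒢 x)‖ ^ 2 ≤ ‖𝒢 x - d‖ ^ 2 := by gcongr
    _ ≤ ⟪𝒢 x - d, 𝒢 x⟫ := by linarith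

theorem norm_gradientMapping_sub_smul_le_norm [CompleteSpace E] {L : ℝ}
    (hfc : ConvexOn ℝ univ f) (hf : ∀ x, HasGradientAt f (f' x) x)
    (hlip : ∀ x y, ‖f' x - f' y‖ ≤ L * ‖x - y‖) (hgc : ConvexOn ℝ univ g)
    (hprox : ∀ y, IsMinOn (fun z => g z + 1 / (2 * t) * ‖z - y‖ ^ 2) univ (prox y))
    (hL : 0 < L) (ht : 0 < t) (htL : t * L ≤ 1) (x : E) :
    ‖𝒢 (x - t • 𝒢 x)‖ ≤ ‖𝒢 x‖ := by
  set d := f' x - f' (x - t • 𝒢 x)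
  have hkey := sq_norm_gradientMapping_sub_smul_le_inner hfc hf hlip hgc hprox hL ht htL x
  have hcoco : ‖d‖ ^ 2 ≤ ⟪d, 𝒢 x⟫ :=
    hfc.sq_norm_sub_le_inner_of_lipschitz_gradient hf hlip hL ht htL x (𝒢 x)
  rw [inner_sub_left, real_inner_self_eq_norm_sq] at hkey
  exact (pow_le_pow_iff_left₀ (norm_nonneg _) (norm_nonneg _) two_ne_zero).mp
    (by nlinarith [sq_nonneg ‖d‖])

theorem mul_sq_norm_gradientMapping_sub_smul_le [CompleteSpace E] {L : ℝ}
    (hfc : ConvexOn ℝ univ f) (hf : ∀ x, HasGradientAt f (f' x) x)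
    (hlip : ∀ x y, ‖f' x - f' y‖ ≤ L * ‖x - y‖) (hgc : ConvexOn ℝ univ g)
    (hprox : ∀ y, IsMinOn (fun z => g z + 1 / (2 * t) * ‖z - y‖ ^ 2) univ (prox y))
    (hL : 0 < L) (ht : 0 < t) (htL : t * L ≤ 1) (x : E) :
    t * ‖𝒢 (x - t • 𝒢 x)‖ ^ 2 ≤ (f x + g x) - (f (x - t • 𝒢 x) + g (x - t • 𝒢 x)) :=
  (mul_le_mul_of_nonneg_left
    (sq_norm_gradientMapping_sub_smul_le_inner hfc hf hlip hgc hprox hL ht htL x) ht.le).trans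
    (mul_inner_gradientMapping_le hfc hf hgc hprox ht.ne' x)

end ProximalGradient

theorem potential_decrease_prox_grad_general
    {E : Type*} [NormedAddCommGroup E] [InnerProductSpace ℝ E] [FiniteDimensional ℝ E]
    (f : E → ℝ) (f' : E → E) (g : E → ℝ) (L : ℝ) (hL : 0 < L)
    (hdiff : ∀ x, HasGradientAt f (f' x) x)
    (hconv : ConvexOn ℝ Set.univ f)
    (hlip : ∀ x y, ‖f' x - f' y‖ ≤ L * ‖x - y‖)
    (hg : ConvexOn ℝ Set.univ g)
    (η : ℝ) (hη : 0 < η) (hη1 : η ≤ 1) (prox : E → E)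
    (hprox : ∀ y : E, IsMinOn
      (fun z => g z + (1 / (2 * (η / L))) * ‖z - y‖ ^ 2) Set.univ (prox y))
    (xstar : E)
    (x : ℕ → E)
    (hx : ∀ k, x (k + 1) =
      x k - (η / L) • ((L / η) • (x k - prox (x k - (η / L) • f' (x k))))) :
    ∀ k : ℕ,
      (η / L) * (k + 1) * ‖(L / η) • (x (k + 1) - prox (x (k + 1) - (η / L) • f' (x (k + 1))))‖ ^ 2
          + (f (x (k + 1)) + g (x (k + 1))) - (f xstar + g xstar)
        ≤ (η / L) * k * ‖(L / η) • (x k - prox (x k - (η / L) • f' (x k)))‖ ^ 2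
          + (f (x k) + g (x k)) - (f xstar + g xstar) := by
  intro k
  set t := η / L
  have ht : 0 < t := div_pos hη hL
  have htL : t * L ≤ 1 := by rwa [div_mul_cancel₀ η hL.ne']
  rw [← inv_div η L] at hx ⊢
  change t * (k + 1) * ‖gradientMapping f' prox t (x (k + 1))‖ ^ 2 + _ - _
    ≤ t * k * ‖gradientMapping f' prox t (x k)‖ ^ 2 + _ - _
  have hstep : x (k + 1) = x k - t • gradientMapping f' prox t (x k) := hx k
  have hmono := norm_gradientMapping_sub_smul_le_norm hconv hdiff hlip hg hprox hL ht htL (x k)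
  have hdecrease :=
    mul_sq_norm_gradientMapping_sub_smul_le hconv hdiff hlip hg hprox hL ht htL (x k)
  rw [hstep]
  have := mul_le_mul_of_nonneg_left (pow_le_pow_left₀ (norm_nonneg _) hmono 2)
    (by positivity : 0 ≤ t * k)
  linarith

/-- **Potential decrease for proximal gradient descent.** For step `t = η/L`, `0 < η ≤ 1`,
iterates `x^{k+1} = x^k - t G(x^k,t)` (i.e. `x^{k+1} = prox_{tg}(x^k - t∇f x^k)`), the potential
`C_k = t k ‖G(x^k,t)‖² + φ(x^k) - φ̄` is nonincreasing. -/
theorem potential_decrease_prox_grad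
    {E : Type*} [NormedAddCommGroup E] [InnerProductSpace ℝ E] [FiniteDimensional ℝ E]
    (f : E → ℝ) (f' : E → E) (g : E → ℝ) (L : ℝ) (hL : 0 < L)
    (hdiff : ∀ x, HasGradientAt f (f' x) x)
    (hconv : ConvexOn ℝ Set.univ f)
    (hlip : ∀ x y, ‖f' x - f' y‖ ≤ L * ‖x - y‖)
    (hg : ConvexOn ℝ Set.univ g)
    (η : ℝ) (hη : 0 < η) (hη1 : η ≤ 1) (prox : E → E)
    (hprox : ∀ y : E, IsMinOn
      (fun z => g z + (1 / (2 * (η / L))) * ‖z - y‖ ^ 2) Set.univ (prox y))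
    (xstar : E) (hmin : IsMinOn (fun z => f z + g z) Set.univ xstar)
    (x : ℕ → E)
    (hx : ∀ k, x (k + 1) =
      x k - (η / L) • ((L / η) • (x k - prox (x k - (η / L) • f' (x k))))) :
    ∀ k : ℕ,
      (η / L) * (k + 1) * ‖(L / η) • (x (k + 1) - prox (x (k + 1) - (η / L) • f' (x (k + 1))))‖ ^ 2
          + (f (x (k + 1)) + g (x (k + 1))) - (f xstar + g xstar)
        ≤ (η / L) * k * ‖(L / η) • (x k - prox (x k - (η / L) • f' (x k)))‖ ^ 2
          + (f (x k) + g (x k)) - (f xstar + g xstar) :=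
  potential_decrease_prox_grad_general f f' g L hL hdiff hconv hlip hg η hη hη1 prox hprox xstar x
    hx
end
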